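/- For any a ∈ A_{n-1} and any ε > 0, there exists a' ∈ A_n with |I₁(a') - I₁(a)| < ε; consequently inf_{A_n} I₁ ≤ inf_{A_{n-1}} I₁. -/

import Mathlib

open MeasureTheory Set Filter Topology

/-!
Put the new cut-point `x` just above the last cut-point `b`, splitting the last cell. As `x ↓ b`
the new cell `[b, x)` has mass `q → 0` and its centre of mass stays in `[b, x]`, so `θ` stays
bounded and its term `q (log q + θ μ(θ) - ψ(θ))` tends to `0`. The shrunken last cell `[x, ∞)` has
mass and first moment converging to those of `[b, ∞)`, and its term converges because `μ⁻¹` is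
continuous (`μ` being a strictly increasing bijection).
-/

theorem StrictMono.continuous_of_rightInverse {α β : Type*} [LinearOrder α] [TopologicalSpace α]
    [OrderTopology α] [DenselyOrdered α] [LinearOrder β] [TopologicalSpace β] [OrderTopology β]
    {f : α → β} {g : β → α} (hf : StrictMono f) (hfg : Function.RightInverse g f) :
    Continuous g :=
  Monotone.continuous_of_surjective (fun y y' h => by rwa [← hf.le_iff_le, hfg y, hfg y'])
    (hfg.leftInverse_of_injective hf.injective).surjective

theorem continuous_integral_Iic {f : ℝ → ℝ} (hf : Integrable f) :
    Continuous fun x => ∫ t in Iic x, f t := by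
  refine ((continuous_const (y := ∫ t in Iic 0, f t)).add (hf.continuous_primitive 0)).congr
    fun x => ?_
  rw [Pi.add_apply, ← intervalIntegral.integral_Iic_sub_Iic hf.integrableOn hf.integrableOn]
  ring

theorem integral_Iic_lt_integral {f : ℝ → ℝ} (hf : Integrable f) (hpos : ∀ x, 0 < f x) (x : ℝ) :
    ∫ t in Iic x, f t < ∫ t, f t := by
  rw [← intervalIntegral.integral_Iic_add_Ioi hf.integrableOn hf.integrableOn, lt_add_iff_pos_right,
    setIntegral_pos_iff_support_of_nonneg_ae (ae_of_all _ fun y => (hpos y).le) hf.integrableOn,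
    Function.support_eq_univ fun y => (hpos y).ne', univ_inter, Real.volume_Ioi]
  exact ENNReal.zero_lt_top

theorem intervalIntegral_mul_div_intervalIntegral_mem_Icc {r : ℝ → ℝ} {x y : ℝ}
    (hr : IntervalIntegrable r volume x y) (hpos : ∀ s, 0 < r s) (hxy : x < y) :
    (∫ s in x..y, s * r s) / (∫ s in x..y, r s) ∈ Icc x y := by
  have hmass : 0 < ∫ s in x..y, r s := intervalIntegral.intervalIntegral_pos_of_pos hr hpos hxy
  have hmoment : IntervalIntegrable (fun s => s * r s) volume x y :=
    hr.continuousOn_mul continuousOn_id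
  rw [mem_Icc, le_div_iff₀ hmass, div_le_iff₀ hmass, ← intervalIntegral.integral_const_mul,
    ← intervalIntegral.integral_const_mul]
  constructor
  · exact intervalIntegral.integral_mono_on hxy.le (hr.const_mul x) hmoment
      fun s hs => mul_le_mul_of_nonneg_right hs.1 (hpos s).le
  · exact intervalIntegral.integral_mono_on hxy.le hmoment (hr.const_mul y)
      fun s hs => mul_le_mul_of_nonneg_right hs.2 (hpos s).le

theorem tendsto_intervalIntegral_mul_div_intervalIntegral {r : ℝ → ℝ} (hr : LocallyIntegrable r)
    (hpos : ∀ s, 0 < r s) (b : ℝ) :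
    Tendsto (fun x => (∫ s in b..x, s * r s) / (∫ s in b..x, r s)) (𝓝[>] b) (𝓝 b) := by
  have hbounds : ∀ᶠ x in 𝓝[>] b, (∫ s in b..x, s * r s) / (∫ s in b..x, r s) ∈ Icc b x :=
    eventually_nhdsWithin_of_forall fun x hx =>
      intervalIntegral_mul_div_intervalIntegral_mem_Icc
        (hr.integrableOn_isCompact isCompact_uIcc).intervalIntegrable hpos hx
  exact tendsto_of_tendsto_of_tendsto_of_le_of_le' tendsto_const_nhds
    (tendsto_id.mono_left nhdsWithin_le_nhds) (hbounds.mono fun _ h => h.1)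
    (hbounds.mono fun _ h => h.2)

/-- The contribution `q (log q + θ μ(θ) - ψ(θ))`, `θ = μ⁻¹(M / q)`, of a cell of mass `q` and
first moment `M`, with everything after `log q` folded into `φ (M / q)`. -/
noncomputable def cellTerm (φ : ℝ → ℝ) (q M : ℝ) : ℝ :=
  q * (Real.log q + φ (M / q))

section cellTerm

variable {α : Type*} {l : Filter α} {φ : ℝ → ℝ} {u v : α → ℝ}

theorem tendsto_cellTerm {q M : ℝ} (hφ : ContinuousAt φ (M / q)) (hq : q ≠ 0)
    (hu : Tendsto u l (𝓝 q)) (hv : Tendsto v l (𝓝 M)) :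
    Tendsto (fun t => cellTerm φ (u t) (v t)) l (𝓝 (cellTerm φ q M)) :=
  hu.mul ((hu.log hq).add (hφ.tendsto.comp (hv.div hu hq)))

theorem tendsto_cellTerm_zero {c : ℝ} (hφ : ContinuousAt φ c) (hu : Tendsto u l (𝓝 0))
    (hvu : Tendsto (fun t => v t / u t) l (𝓝 c)) :
    Tendsto (fun t => cellTerm φ (u t) (v t)) l (𝓝 0) := by
  have hlog : Tendsto (fun t => u t * Real.log (u t)) l (𝓝 0) := by
    simpa [Function.comp_def] using (Real.continuous_mul_log.tendsto 0).comp hu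
  have hφ' : Tendsto (fun t => u t * φ (v t / u t)) l (𝓝 0) := by
    simpa using hu.mul (hφ.tendsto.comp hvu)
  simpa only [cellTerm, mul_add, add_zero] using hlog.add hφ'

end cellTerm

/-- The increment of `F` over the cell `[b i, b (i + 1))` of the cut-points `b 1 < ⋯ < b m`,
where `F (b 0) = 0` and `F (b (m + 1)) = total` by convention. -/
def cellIncrement (F : ℝ → ℝ) (total : ℝ) (m : ℕ) (b : ℕ → ℝ) (i : ℕ) : ℝ :=
  (if i = m then total else F (b (i + 1))) - (if i = 0 then 0 else F (b i))

section cellIncrement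

variable {F : ℝ → ℝ} {total x : ℝ} {m : ℕ} {b : ℕ → ℝ}

theorem cellIncrement_self (hm : m ≠ 0) : cellIncrement F total m b m = total - F (b m) := by
  simp [cellIncrement, hm]

theorem cellIncrement_update_of_lt {i : ℕ} (hi : i < m) :
    cellIncrement F total (m + 1) (Function.update b (m + 1) x) i =
      cellIncrement F total m b i := by
  simp [cellIncrement, Function.update_of_ne, hi.ne, (hi.trans (Nat.lt_succ_self m)).ne]

theorem cellIncrement_update_self (hm : m ≠ 0) :
    cellIncrement F total (m + 1) (Function.update b (m + 1) x) m = F x - F (b m) := by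
  simp [cellIncrement, hm]

theorem cellIncrement_update_succ :
    cellIncrement F total (m + 1) (Function.update b (m + 1) x) (m + 1) = total - F x := by
  simp [cellIncrement]

end cellIncrement

def partitionSum (g : ℝ → ℝ → ℝ) (F G : ℝ → ℝ) (totalF totalG : ℝ) (m : ℕ) (b : ℕ → ℝ) : ℝ :=
  ∑ i ∈ Finset.range (m + 1), g (cellIncrement F totalF m b i) (cellIncrement G totalG m b i)

theorem partitionSum_update {g : ℝ → ℝ → ℝ} {F G : ℝ → ℝ} {totalF totalG x : ℝ} {m : ℕ}
    {b : ℕ → ℝ} (hm : m ≠ 0) :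
    partitionSum g F G totalF totalG (m + 1) (Function.update b (m + 1) x) =
      partitionSum g F G totalF totalG m b - g (totalF - F (b m)) (totalG - G (b m)) +
        g (F x - F (b m)) (G x - G (b m)) + g (totalF - F x) (totalG - G x) := by
  simp only [partitionSum, Finset.sum_range_succ, cellIncrement_self hm,
    cellIncrement_update_self hm, cellIncrement_update_succ]
  rw [Finset.sum_congr rfl fun i hi => by
    rw [cellIncrement_update_of_lt (Finset.mem_range.1 hi),
      cellIncrement_update_of_lt (Finset.mem_range.1 hi)]]
  ring

theorem tendsto_partitionSum_cellTerm_update {φ F G : ℝ → ℝ} {totalF totalG c : ℝ} {m : ℕ}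
    {b : ℕ → ℝ} (hm : m ≠ 0) (hφ : Continuous φ) (hF : ContinuousAt F (b m))
    (hG : ContinuousAt G (b m)) (htotalF : totalF ≠ F (b m))
    (hratio : Tendsto (fun x => (G x - G (b m)) / (F x - F (b m))) (𝓝[>] (b m)) (𝓝 c)) :
    Tendsto
      (fun x => partitionSum (cellTerm φ) F G totalF totalG (m + 1) (Function.update b (m + 1) x))
      (𝓝[>] (b m)) (𝓝 (partitionSum (cellTerm φ) F G totalF totalG m b)) := by
  have hFx : Tendsto F (𝓝[>] (b m)) (𝓝 (F (b m))) := hF.tendsto.mono_left nhdsWithin_le_nhds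
  have hGx : Tendsto G (𝓝[>] (b m)) (𝓝 (G (b m))) := hG.tendsto.mono_left nhdsWithin_le_nhds
  have hnew : Tendsto (fun x => cellTerm φ (F x - F (b m)) (G x - G (b m))) (𝓝[>] (b m)) (𝓝 0) :=
    tendsto_cellTerm_zero hφ.continuousAt (by simpa using hFx.sub_const (F (b m))) hratio
  have hlast := tendsto_cellTerm hφ.continuousAt (sub_ne_zero.2 htotalF)
    (tendsto_const_nhds (x := totalF) |>.sub hFx) (tendsto_const_nhds (x := totalG) |>.sub hGx)
  simp only [partitionSum_update hm]
  convert ((tendsto_const_nhds (x := partitionSum (cellTerm φ) F G totalF totalG m b -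
    cellTerm φ (totalF - F (b m)) (totalG - G (b m)))).add hnew).add hlast using 2
  ring

def IsCutSeq (X : Set ℝ) (m : ℕ) (b : ℕ → ℝ) : Prop :=
  (∀ i, 1 ≤ i → i ≤ m → b i ∈ X) ∧ ∀ i j, 1 ≤ i → i < j → j ≤ m → b i < b j

theorem IsCutSeq.update {X : Set ℝ} {m : ℕ} {b : ℕ → ℝ} {x : ℝ} (hb : IsCutSeq X m b)
    (hx : x ∈ X) (hbx : b m < x) : IsCutSeq X (m + 1) (Function.update b (m + 1) x) := by
  obtain ⟨hbX, hbmono⟩ := hb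
  refine ⟨fun i hi1 hi => ?_, fun i j hi1 hij hj => ?_⟩
  · rcases (Nat.le_succ_iff.1 hi) with hi | rfl
    · rw [Function.update_of_ne (by omega)]; exact hbX i hi1 hi
    · rwa [Function.update_self]
  · rw [Function.update_of_ne (by omega : i ≠ m + 1)]
    rcases (Nat.le_succ_iff.1 hj) with hj | rfl
    · rw [Function.update_of_ne (by omega)]; exact hbmono i j hi1 hij hj
    · rw [Function.update_self]
      rcases (Nat.lt_succ_iff.1 hij).lt_or_eq with him | rfl
      · exact (hbmono i m hi1 him le_rfl).trans hbx
      · exact hbx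

theorem EReal.biInf_coe_le_of_forall_approx {ι ι' : Type*} {s : Set ι} {s' : Set ι'}
    {f : ι → ℝ} {f' : ι' → ℝ} (h : ∀ a ∈ s, ∀ ε > (0 : ℝ), ∃ a' ∈ s', |f' a' - f a| < ε) :
    ⨅ a' ∈ s', (f' a' : EReal) ≤ ⨅ a ∈ s, (f a : EReal) := by
  refine le_iInf₂ fun a ha => le_of_forall_gt_imp_ge_of_dense fun c hc => ?_
  obtain ⟨x, hax, hxc⟩ := EReal.lt_iff_exists_real_btwn.1 hc
  obtain ⟨a', ha', hclose⟩ := h a ha (x - f a) (by linarith [EReal.coe_lt_coe_iff.1 hax])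
  calc ⨅ a' ∈ s', (f' a' : EReal) ≤ f' a' := iInf₂_le a' ha'
    _ ≤ x := EReal.coe_le_coe_iff.2 (by linarith [(abs_lt.1 hclose).2])
    _ ≤ c := hxc.le

theorem smml_insert_cutpoint_approx_general
    (X : Set ℝ) (hX : IsOpen X)
    (r : ℝ → ℝ) (hrpos : ∀ x, 0 < r x)
    (hint : Integrable r) (hnorm : ∫ x, r x = 1)
    (hint1 : Integrable (fun x => x * r x))
    (ψ μ dμ : ℝ → ℝ) (hψ : ∀ θ, HasDerivAt ψ (μ θ) θ)
    (hμ : ∀ θ, HasDerivAt μ (dμ θ) θ) (hdμpos : ∀ θ, 0 < dμ θ)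
    (μinv : ℝ → ℝ) (hinvr : ∀ y, μ (μinv y) = y)
    (C : ℝ)
    (R : ℝ → ℝ) (hR : ∀ x, R x = ∫ t in Iic x, r t)
    (Q : ℕ → (ℕ → ℝ) → ℕ → ℝ)
    (hQ : ∀ m b i, Q m b i =
      (if i = m then 1 else R (b (i + 1))) - (if i = 0 then 0 else R (b i)))
    (M : ℕ → (ℕ → ℝ) → ℕ → ℝ)
    (hM : ∀ m b i, M m b i =
      (if i = m then ∫ t, t * r t else ∫ t in Iic (b (i + 1)), t * r t) -
      (if i = 0 then 0 else ∫ t in Iic (b i), t * r t))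
    (TH : ℕ → (ℕ → ℝ) → ℕ → ℝ) (hTH : ∀ m b i, TH m b i = μinv (M m b i / Q m b i))
    (I1 : ℕ → (ℕ → ℝ) → ℝ)
    (hI1 : ∀ m b, I1 m b = C - ∑ i ∈ Finset.range (m + 1),
      Q m b i * (Real.log (Q m b i) + TH m b i * μ (TH m b i) - ψ (TH m b i)))
    (A : ℕ → Set (ℕ → ℝ))
    (hA : ∀ m, A m = {b | (∀ i, 1 ≤ i → i ≤ m → b i ∈ X) ∧
      ∀ i j, 1 ≤ i → i < j → j ≤ m → b i < b j})
    (m : ℕ) (hm : 1 ≤ m) :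
    (∀ a ∈ A m, ∀ ε > (0 : ℝ), ∃ a' ∈ A (m + 1), |I1 (m + 1) a' - I1 m a| < ε) ∧
    (⨅ a' ∈ A (m + 1), (I1 (m + 1) a' : EReal)) ≤ ⨅ a ∈ A m, (I1 m a : EReal) := by
  set L : ℝ → ℝ := fun x => ∫ t in Iic x, t * r t
  set φ : ℝ → ℝ := fun y => μinv y * μ (μinv y) - ψ (μinv y)
  have hφ : Continuous φ := by
    have hμc : Continuous μ := continuous_iff_continuousAt.2 fun θ => (hμ θ).continuousAt
    have hψc : Continuous ψ := continuous_iff_continuousAt.2 fun θ => (hψ θ).continuousAt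
    have hinv : Continuous μinv :=
      (strictMono_of_hasDerivAt_pos hμ hdμpos).continuous_of_rightInverse hinvr
    exact (hinv.mul (hμc.comp hinv)).sub (hψc.comp hinv)
  have hI : ∀ m b, I1 m b = C - partitionSum (cellTerm φ) R L 1 (∫ t, t * r t) m b := fun m b => by
    rw [hI1, partitionSum]
    refine congrArg _ (Finset.sum_congr rfl fun i _ => ?_)
    rw [hTH, hQ, hM, cellTerm, cellIncrement, cellIncrement, add_sub_assoc]
  have approx : ∀ a ∈ A m, ∀ ε > (0 : ℝ), ∃ a' ∈ A (m + 1), |I1 (m + 1) a' - I1 m a| < ε := by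
    intro a ha ε hε
    rw [hA] at ha
    change IsCutSeq X m a at ha
    have hlast : 1 ≠ R (a m) := by
      rw [hR, ← hnorm]; exact (integral_Iic_lt_integral hint hrpos (a m)).ne'
    have hcentre : Tendsto (fun x => (L x - L (a m)) / (R x - R (a m))) (𝓝[>] (a m)) (𝓝 (a m)) := by
      refine (tendsto_intervalIntegral_mul_div_intervalIntegral hint.locallyIntegrable hrpos
        (a m)).congr fun x => ?_
      rw [hR, hR, intervalIntegral.integral_Iic_sub_Iic hint1.integrableOn hint1.integrableOn,
        intervalIntegral.integral_Iic_sub_Iic hint.integrableOn hint.integrableOn]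
    have hlim := tendsto_partitionSum_cellTerm_update (totalG := ∫ t, t * r t) (by omega) hφ
      ((continuous_integral_Iic hint).congr fun x => (hR x).symm).continuousAt
      (continuous_integral_Iic hint1).continuousAt hlast hcentre
    have hclose := (Metric.tendsto_nhds.1 hlim ε hε).mono fun x hx => by
      rwa [Real.dist_eq, abs_sub_comm, ← sub_sub_sub_cancel_left _ _ C, ← hI, ← hI] at hx
    have hX' : ∀ᶠ x in 𝓝[>] (a m), x ∈ X :=
      mem_nhdsWithin_of_mem_nhds (hX.mem_nhds (ha.1 m hm le_rfl))
    obtain ⟨x, hx, hxX, hax⟩ := (hclose.and (hX'.and self_mem_nhdsWithin)).exists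
    exact ⟨_, by rw [hA]; exact ha.update hxX hax, hx⟩
  exact ⟨approx, EReal.biInf_coe_le_of_forall_approx approx⟩

/-- Inserting an extra cut-point close to an existing one changes `I₁` by arbitrarily
little: for any `a ∈ A_n` (with `n ≥ 1`) and `ε > 0` there is `a' ∈ A_{n+1}` with
`|I₁(a') - I₁(a)| < ε`; consequently `inf_{A_{n+1}} I₁ ≤ inf_{A_n} I₁`. -/
theorem smml_insert_cutpoint_approx
    (X : Set ℝ) (hX : IsOpen X)
    (r : ℝ → ℝ) (hr : Continuous r) (hrpos : ∀ x, 0 < r x)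
    (hint : Integrable r) (hnorm : ∫ x, r x = 1)
    (hint1 : Integrable (fun x => x * r x))
    (ψ μ dμ : ℝ → ℝ) (hψ : ∀ θ, HasDerivAt ψ (μ θ) θ)
    (hμ : ∀ θ, HasDerivAt μ (dμ θ) θ) (hdμcont : Continuous dμ) (hdμpos : ∀ θ, 0 < dμ θ)
    (μinv : ℝ → ℝ) (hinvl : ∀ θ, μinv (μ θ) = θ) (hinvr : ∀ y, μ (μinv y) = y)
    (C : ℝ)
    (R : ℝ → ℝ) (hR : ∀ x, R x = ∫ t in Iic x, r t)
    (Q : ℕ → (ℕ → ℝ) → ℕ → ℝ)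
    (hQ : ∀ m b i, Q m b i =
      (if i = m then 1 else R (b (i + 1))) - (if i = 0 then 0 else R (b i)))
    (M : ℕ → (ℕ → ℝ) → ℕ → ℝ)
    (hM : ∀ m b i, M m b i =
      (if i = m then ∫ t, t * r t else ∫ t in Iic (b (i + 1)), t * r t) -
      (if i = 0 then 0 else ∫ t in Iic (b i), t * r t))
    (TH : ℕ → (ℕ → ℝ) → ℕ → ℝ) (hTH : ∀ m b i, TH m b i = μinv (M m b i / Q m b i))
    (I1 : ℕ → (ℕ → ℝ) → ℝ)
    (hI1 : ∀ m b, I1 m b = C - ∑ i ∈ Finset.range (m + 1),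
      Q m b i * (Real.log (Q m b i) + TH m b i * μ (TH m b i) - ψ (TH m b i)))
    (A : ℕ → Set (ℕ → ℝ))
    (hA : ∀ m, A m = {b | (∀ i, 1 ≤ i → i ≤ m → b i ∈ X) ∧
      ∀ i j, 1 ≤ i → i < j → j ≤ m → b i < b j})
    (m : ℕ) (hm : 1 ≤ m) :
    (∀ a ∈ A m, ∀ ε > (0 : ℝ), ∃ a' ∈ A (m + 1), |I1 (m + 1) a' - I1 m a| < ε) ∧
    (⨅ a' ∈ A (m + 1), (I1 (m + 1) a' : EReal)) ≤ ⨅ a ∈ A m, (I1 m a : EReal) :=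
  smml_insert_cutpoint_approx_general X hX r hrpos hint hnorm hint1 ψ μ dμ hψ hμ hdμpos μinv hinvr C
    R hR Q hQ M hM TH hTH I1 hI1 A hA m hm
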